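/- Let a⁺ = (a₁⁺, a₂⁺, a₃⁺, a₄⁺). For every r ∈ ℛ⁻ with r > 0 and every t ∈ [0, 1], h_r(t; a⁺) ≤ h_r(1; a⁺); and for every r ∈ ℛ⁺ and every t ∈ [0, 1], h_r(t; a⁺) ≥ h_r(1; a⁺). -/

import Mathlib

noncomputable section

open Real Filter

/-- Rankin's auxiliary function `h_r(t; a) = t^r − a₁t − a₂t² − a₃t³ − a₄t⁴`,
where `t ^ r` is the real power. -/
def hfun (r a₁ a₂ a₃ a₄ t : ℝ) : ℝ :=
  t ^ r - a₁ * t - a₂ * t ^ 2 - a₃ * t ^ 3 - a₄ * t ^ 4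

def P1p (r κ η : ℝ) : ℝ :=
  r * κ ^ (r - 1) * η * (κ - 1) * (η - κ) * (κ * η + 2 * κ + η) * (η - 1) ^ 2
    + 2 * (κ ^ r - 1) * κ * η * (η - 1) ^ 2 * (2 * κ * η + 4 * κ - η ^ 2 - 2 * η - 3)

def P2p (r κ η : ℝ) : ℝ :=
  r * κ ^ (r - 1) * (κ - 1) * (κ - η) * (η - 1) ^ 2 * (2 * κ * η + κ + η ^ 2 + 2 * η)
    + (η ^ r - 1) * (κ - 1) ^ 2 *
      (8 * κ * η ^ 2 + 4 * η ^ 2 - η * κ ^ 2 - 2 * κ * η - 3 * η - κ ^ 3 - 2 * κ ^ 2 - 3 * κ)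

def P3p (r κ η : ℝ) : ℝ :=
  r * κ ^ (r - 1) * (κ - 1) * (κ + 2 * η + 1) * (η - κ) * (η - 1) ^ 2
    + 2 * (κ ^ r - 1) * (2 * κ ^ 2 + 2 * κ * η - η ^ 2 - 2 * η - 1) * (η - 1) ^ 2

def P4p (r κ η : ℝ) : ℝ :=
  r * κ ^ (r - 1) * (κ - 1) * (κ - η) * (η - 1) ^ 2
    + (η ^ r - 1) * (κ - 1) ^ 2 * (3 * η - κ - 2)

/-- `κ₊ = (6 − √21)/20`. -/
def κp : ℝ := (6 - Real.sqrt 21) / 20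

/-- `η₊ = (6 + √21)/20`. -/
def ηp : ℝ := (6 + Real.sqrt 21) / 20

def a1p (r : ℝ) : ℝ :=
  (P1p r κp ηp - P1p r ηp κp) / ((κp - 1) ^ 2 * (ηp - 1) ^ 2 * (κp - ηp) ^ 3)

def a2p (r : ℝ) : ℝ :=
  (P2p r κp ηp - P2p r ηp κp) / ((κp - 1) ^ 2 * (ηp - 1) ^ 2 * (κp - ηp) ^ 3)

def a3p (r : ℝ) : ℝ :=
  (P3p r κp ηp - P3p r ηp κp) / ((κp - 1) ^ 2 * (ηp - 1) ^ 2 * (κp - ηp) ^ 3)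

def a4p (r : ℝ) : ℝ :=
  (P4p r κp ηp - P4p r ηp κp) / ((κp - 1) ^ 2 * (ηp - 1) ^ 2 * (κp - ηp) ^ 3)

/-- `a₀⁺ = 1 − a₁⁺ − a₂⁺ − a₃⁺ − a₄⁺`. -/
def a0p (r : ℝ) : ℝ := 1 - a1p r - a2p r - a3p r - a4p r

/-- `ℛ⁻ = (0,1] ∪ [2,3] ∪ [4,∞)`. -/
def Rminus : Set ℝ := Set.Ioc 0 1 ∪ Set.Icc 2 3 ∪ Set.Ici 4

/-- `ℛ⁺ = [1,2] ∪ [3,4]`. -/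
def Rplus : Set ℝ := Set.Icc 1 2 ∪ Set.Icc 3 4

/-!
Write `g(t) = h_r(1; a⁺) − h_r(t; a⁺) = p(t) − t^r` with `p(t) = a₀ + a₁t + ⋯ + a₄t⁴` and
`a₀ = 1 − a₁ − ⋯ − a₄`. The coefficients `a⁺` are chosen so that `g` has double zeros at
`κ₊` and `η₊`; it also vanishes at `1`. Hermite interpolation at the nodes `κ₊, κ₊, η₊, η₊, 1`
gives `g(t) = g⁽⁵⁾(ξ)/5! · (t − κ₊)²(t − η₊)²(t − 1)` for some `ξ ∈ (0,1)`, the last factor is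
`≤ 0` on `[0,1]`, and `g⁽⁵⁾(ξ) = −r(r−1)(r−2)(r−3)(r−4) ξ^(r−5)` is `≤ 0` for `r ∈ ℛ⁻` and
`≥ 0` for `r ∈ ℛ⁺`.
-/

open Set Polynomial

theorem exists_finset_deriv_eq_zero {f f' : ℝ → ℝ} {a b : ℝ}
    (hfc : ContinuousOn f (Icc a b)) (hf : ∀ x ∈ Ioo a b, HasDerivAt f (f' x) x)
    (Z : Finset ℝ) (hZ : ↑Z ⊆ Icc a b) (hfZ : ∀ x ∈ Z, f x = 0) :
    ∃ Z' : Finset ℝ, Z.card ≤ Z'.card + 1 ∧ Disjoint Z Z' ∧ ↑Z' ⊆ Ioo a b ∧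
      ∀ x ∈ Z', f' x = 0 := by
  induction Z using Finset.induction_on_max generalizing b with
  | empty => exact ⟨∅, by simp⟩
  | insert m s hlt ih =>
    rcases s.eq_empty_or_nonempty with rfl | hs
    · exact ⟨∅, by simp⟩
    set m' := s.max' hs
    have hm'm : m' < m := hlt _ (s.max'_mem hs)
    have hm : m ∈ Icc a b := hZ (Finset.mem_insert_self m s)
    have hs_sub : ↑s ⊆ Icc a m' := fun x hx =>
      ⟨(hZ (Finset.mem_insert_of_mem hx)).1, s.le_max' x hx⟩
    have ham' : a ≤ m' := (hs_sub (s.max'_mem hs)).1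
    obtain ⟨Z'', hcard, hdisj, hsub, hzero⟩ :=
      ih (hfc.mono (Icc_subset_Icc_right (hm'm.le.trans hm.2)))
        (fun x hx => hf x ⟨hx.1, hx.2.trans (hm'm.trans_le hm.2)⟩) hs_sub
        (fun x hx => hfZ x (Finset.mem_insert_of_mem hx))
    obtain ⟨c, hc, hc0⟩ := exists_hasDerivAt_eq_zero hm'm
      (hfc.mono (Icc_subset_Icc ham' hm.2))
      ((hfZ m' (Finset.mem_insert_of_mem (s.max'_mem hs))).trans
        (hfZ m (Finset.mem_insert_self m s)).symm)
      (fun x hx => hf x ⟨ham'.trans_lt hx.1, hx.2.trans_le hm.2⟩)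
    have hcZ'' : c ∉ Z'' := fun h => (hsub h).2.not_gt hc.1
    have hmZ'' : m ∉ Z'' := fun h => (hsub h).2.not_gt hm'm
    have hcs : c ∉ s := fun h => hc.1.not_ge (s.le_max' c h)
    refine ⟨insert c Z'', ?_, ?_, ?_, ?_⟩
    · rw [Finset.card_insert_of_notMem hcZ'',
        Finset.card_insert_of_notMem (fun h => (hlt m h).false)]
      omega
    · simp only [Finset.disjoint_insert_left, Finset.disjoint_insert_right, Finset.mem_insert]
      exact ⟨by rintro (h | h) <;> [exact hc.2.ne h; exact hcs h], hmZ'', hdisj⟩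
    · rw [Finset.coe_insert]
      exact insert_subset ⟨ham'.trans_lt hc.1, hc.2.trans_le hm.2⟩
        (hsub.trans (Ioo_subset_Ioo_right (hm'm.le.trans hm.2)))
    · simpa [hc0] using hzero

theorem exists_deriv_chain_eq_zero_of_lt_card {f : ℕ → ℝ → ℝ} {a b : ℝ}
    (hf : ∀ k, ∀ x ∈ Ioo a b, HasDerivAt (f k) (f (k + 1) x) x)
    (Z : Finset ℝ) (hZ : ↑Z ⊆ Ioo a b) (hfZ : ∀ x ∈ Z, f 0 x = 0) {n : ℕ} (hn : n < Z.card) :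
    ∃ x ∈ Ioo a b, f n x = 0 := by
  induction n generalizing f Z with
  | zero =>
    obtain ⟨x, hx⟩ := Finset.card_pos.mp hn
    exact ⟨x, hZ hx, hfZ x hx⟩
  | succ n ih =>
    have hne : Z.Nonempty := Finset.card_pos.mp (by omega)
    have hspan : Icc (Z.min' hne) (Z.max' hne) ⊆ Ioo a b :=
      Icc_subset_Ioo (hZ (Z.min'_mem hne)).1 (hZ (Z.max'_mem hne)).2
    obtain ⟨Z', hcard, -, hsub, hzero⟩ := exists_finset_deriv_eq_zero
      (fun x hx => (hf 0 x (hspan hx)).continuousAt.continuousWithinAt)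
      (fun x hx => hf 0 x (hspan (Ioo_subset_Icc_self hx))) Z
      (fun x hx => ⟨Z.min'_le x hx, Z.le_max' x hx⟩) hfZ
    exact ih (f := fun k => f (k + 1)) (fun k => hf (k + 1)) Z'
      (hsub.trans (Ioo_subset_Icc_self.trans hspan)) hzero (by omega)

theorem Polynomial.Monic.iterate_derivative_natDegree {R : Type*} [Semiring R] {p : R[X]}
    (hp : p.Monic) : derivative^[p.natDegree] p = C (p.natDegree.factorial : R) := by
  rw [eq_C_of_natDegree_le_zero ((natDegree_iterate_derivative _ _).trans (Nat.sub_self _).le),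
    coeff_iterate_derivative, zero_add, hp.coeff_natDegree, Nat.descFactorial_self,
    nsmul_one]

/-- Rolle's theorem for the zeros `κ, κ, η, η, x₁, x₂` counted with multiplicity. -/
theorem exists_fifth_deriv_eq_zero {f : ℕ → ℝ → ℝ} {a b κ η x₁ x₂ : ℝ}
    (hcont : ContinuousOn (f 0) (Icc a b))
    (hf : ∀ k, ∀ x ∈ Ioo a b, HasDerivAt (f k) (f (k + 1) x) x)
    (hκ : κ ∈ Ioo a b) (hη : η ∈ Ioo a b) (hx₁ : x₁ ∈ Icc a b) (hx₂ : x₂ ∈ Icc a b)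
    (hcard : ({κ, η, x₁, x₂} : Finset ℝ).card = 4)
    (hf0 : ∀ x ∈ ({κ, η, x₁, x₂} : Finset ℝ), f 0 x = 0) (hf'κ : f 1 κ = 0) (hf'η : f 1 η = 0) :
    ∃ ξ ∈ Ioo a b, f 5 ξ = 0 := by
  have hκη : κ ≠ η := by
    rintro rfl
    rw [Finset.insert_idem] at hcard
    exact absurd hcard (Finset.card_le_three.trans_lt (by norm_num)).ne
  obtain ⟨Z, hZcard, hZdisj, hZsub, hZ⟩ := exists_finset_deriv_eq_zero hcont (hf 0) _
    (by simp [insert_subset_iff, Ioo_subset_Icc_self hκ, Ioo_subset_Icc_self hη, hx₁, hx₂]) hf0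
  have hκZ : κ ∉ Z := Finset.disjoint_left.1 hZdisj (by simp)
  have hηZ : η ∉ Z := Finset.disjoint_left.1 hZdisj (by simp)
  refine exists_deriv_chain_eq_zero_of_lt_card (f := fun k => f (k + 1)) (fun k => hf (k + 1))
    (insert κ (insert η Z)) (by simp [insert_subset_iff, hκ, hη, hZsub]) ?_ ?_
  · simp only [Finset.mem_insert]
    rintro x (rfl | rfl | hx)
    exacts [hf'κ, hf'η, hZ x hx]
  · rw [Finset.card_insert_of_notMem (by simp [hκη, hκZ]), Finset.card_insert_of_notMem hηZ]
    omega

theorem nonneg_of_double_zeros_of_fifth_deriv_nonpos {f : ℕ → ℝ → ℝ} {a b κ η t : ℝ}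
    (hcont : ContinuousOn (f 0) (Icc a b))
    (hf : ∀ k, ∀ x ∈ Ioo a b, HasDerivAt (f k) (f (k + 1) x) x)
    (hκ : κ ∈ Ioo a b) (hη : η ∈ Ioo a b) (hκη : κ ≠ η)
    (hfκ : f 0 κ = 0) (hfη : f 0 η = 0) (hfb : f 0 b = 0) (hf'κ : f 1 κ = 0) (hf'η : f 1 η = 0)
    (hf5 : ∀ x ∈ Ioo a b, f 5 x ≤ 0) (ht : t ∈ Icc a b) : 0 ≤ f 0 t := by
  by_cases hnode : t = κ ∨ t = η ∨ t = b
  · rcases hnode with rfl | rfl | rfl <;> simp [hfκ, hfη, hfb]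
  simp only [not_or] at hnode
  obtain ⟨htκ, htη, htb⟩ := hnode
  set w : ℝ[X] := (X - C κ) ^ 2 * (X - C η) ^ 2 * (X - C b)
  have hwt : w.eval t < 0 := by
    have : 0 < (t - κ) ^ 2 * (t - η) ^ 2 := by
      have := sub_ne_zero.2 htκ
      have := sub_ne_zero.2 htη
      positivity
    simpa [w] using mul_neg_of_pos_of_neg this (sub_neg.2 (lt_of_le_of_ne ht.2 htb))
  have hw5 : derivative^[5] w = C 120 := by
    have hdeg : w.natDegree = 5 := by
      rw [natDegree_mul, natDegree_mul, natDegree_pow, natDegree_pow] <;> simp [X_sub_C_ne_zero]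
    have hmon : w.Monic := by simp only [w]; monicity!
    simpa [hdeg, Nat.factorial] using hmon.iterate_derivative_natDegree
  -- Hermite interpolation error: `f 0 t = c * w(t)` with `120 c = f 5 ξ` for some `ξ`.
  set c := f 0 t / w.eval t
  set φ : ℕ → ℝ → ℝ := fun k x => f k x - c * (derivative^[k] w).eval x
  have hφ : ∀ k, ∀ x ∈ Ioo a b, HasDerivAt (φ k) (φ (k + 1) x) x := fun k x hx => by
    simp only [φ, Function.iterate_succ_apply']
    exact (hf k x hx).sub ((Polynomial.hasDerivAt _ x).const_mul c)
  have hφt : φ 0 t = 0 := by simp [φ, c, hwt.ne]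
  obtain ⟨ξ, hξ, hφξ⟩ := exists_fifth_deriv_eq_zero (x₁ := b) (x₂ := t)
    (hcont.sub (continuousOn_const.mul (Polynomial.continuousOn _))) hφ hκ hη
    ⟨ht.1.trans ht.2, le_rfl⟩ ht
    (by rw [Finset.card_insert_of_notMem (by simp [hκη, hκ.2.ne, Ne.symm htκ]),
      Finset.card_insert_of_notMem (by simp [hη.2.ne, Ne.symm htη]),
      Finset.card_pair (Ne.symm htb)])
    (by
      simp only [Finset.mem_insert, Finset.mem_singleton]
      rintro x (rfl | rfl | rfl | rfl)
      all_goals first | exact hφt | simp [φ, w, hfκ, hfη, hfb])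
    (by simp [φ, w, derivative_mul, derivative_pow, hf'κ])
    (by simp [φ, w, derivative_mul, derivative_pow, hf'η])
  have hc : c ≤ 0 := by
    have := hf5 ξ hξ
    simp only [φ, hw5, eval_C] at hφξ
    linarith
  have hft : f 0 t = c * w.eval t := by simp [c, hwt.ne]
  rw [hft]
  exact mul_nonneg_of_nonpos_of_nonpos hc hwt.le

def polySubRpowDeriv (p : ℝ[X]) (r : ℝ) (k : ℕ) (x : ℝ) : ℝ :=
  (derivative^[k] p).eval x - (descPochhammer ℝ k).eval r * x ^ (r - k)

theorem polySubRpowDeriv_zero (p : ℝ[X]) (r x : ℝ) :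
    polySubRpowDeriv p r 0 x = p.eval x - x ^ r := by
  simp [polySubRpowDeriv]

theorem hasDerivAt_polySubRpowDeriv (p : ℝ[X]) (r : ℝ) (k : ℕ) {x : ℝ} (hx : x ≠ 0) :
    HasDerivAt (polySubRpowDeriv p r k) (polySubRpowDeriv p r (k + 1) x) x := by
  have hpow := (Real.hasDerivAt_rpow_const (p := r - k) (Or.inl hx)).const_mul
    ((descPochhammer ℝ k).eval r)
  refine ((Polynomial.hasDerivAt (derivative^[k] p) x).sub hpow).congr_deriv ?_
  simp only [polySubRpowDeriv, Function.iterate_succ_apply', descPochhammer_succ_eval]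
  push_cast
  ring_nf

theorem continuous_polySubRpowDeriv_zero (p : ℝ[X]) {r : ℝ} (hr : 0 ≤ r) :
    Continuous (polySubRpowDeriv p r 0) := by
  simp only [funext (polySubRpowDeriv_zero p r)]
  exact p.continuous.sub (Real.continuous_rpow_const hr)

theorem descPochhammer_eval_five (r : ℝ) :
    (descPochhammer ℝ 5).eval r = r * (r - 1) * (r - 2) * (r - 3) * (r - 4) := by
  simp [descPochhammer_succ_eval]

theorem descPochhammer_eval_five_nonneg_of_mem_Rminus {r : ℝ} (hr : r ∈ Rminus) :
    0 ≤ (descPochhammer ℝ 5).eval r := by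
  rw [descPochhammer_eval_five]
  rcases hr with (⟨h0, h1⟩ | ⟨h2, h3⟩) | h4
  · rw [show r * (r - 1) * (r - 2) * (r - 3) * (r - 4)
        = r * (1 - r) * (2 - r) * (3 - r) * (4 - r) by ring]
    exact mul_nonneg (mul_nonneg (mul_nonneg (mul_nonneg (by linarith) (by linarith))
      (by linarith)) (by linarith)) (by linarith)
  · rw [show r * (r - 1) * (r - 2) * (r - 3) * (r - 4)
        = r * (r - 1) * (r - 2) * (3 - r) * (4 - r) by ring]
    exact mul_nonneg (mul_nonneg (mul_nonneg (mul_nonneg (by linarith) (by linarith))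
      (by linarith)) (by linarith)) (by linarith)
  · have h4 : (4 : ℝ) ≤ r := h4
    exact mul_nonneg (mul_nonneg (mul_nonneg (mul_nonneg (by linarith) (by linarith))
      (by linarith)) (by linarith)) (by linarith)

theorem descPochhammer_eval_five_nonpos_of_mem_Rplus {r : ℝ} (hr : r ∈ Rplus) :
    (descPochhammer ℝ 5).eval r ≤ 0 := by
  rw [descPochhammer_eval_five, ← neg_nonneg]
  rcases hr with ⟨h1, h2⟩ | ⟨h3, h4⟩
  · rw [show -(r * (r - 1) * (r - 2) * (r - 3) * (r - 4))
        = r * (r - 1) * (2 - r) * (3 - r) * (4 - r) by ring]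
    exact mul_nonneg (mul_nonneg (mul_nonneg (mul_nonneg (by linarith) (by linarith))
      (by linarith)) (by linarith)) (by linarith)
  · rw [show -(r * (r - 1) * (r - 2) * (r - 3) * (r - 4))
        = r * (r - 1) * (r - 2) * (r - 3) * (4 - r) by ring]
    exact mul_nonneg (mul_nonneg (mul_nonneg (mul_nonneg (by linarith) (by linarith))
      (by linarith)) (by linarith)) (by linarith)

theorem four_lt_sqrt_21 : 4 < √21 := by
  rw [Real.lt_sqrt (by norm_num)]; norm_num

theorem sqrt_21_lt_five : √21 < 5 := by
  rw [Real.sqrt_lt' (by norm_num)]; norm_num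

theorem κp_mem_Ioo : κp ∈ Ioo 0 1 := by
  constructor <;> unfold κp <;> linarith [four_lt_sqrt_21, sqrt_21_lt_five]

theorem ηp_mem_Ioo : ηp ∈ Ioo 0 1 := by
  constructor <;> unfold ηp <;> linarith [four_lt_sqrt_21, sqrt_21_lt_five]

theorem κp_lt_ηp : κp < ηp := by
  unfold κp ηp; linarith [four_lt_sqrt_21]

def rankinPolyPlus (r : ℝ) : ℝ[X] :=
  C (a0p r) + C (a1p r) * X + C (a2p r) * X ^ 2 + C (a3p r) * X ^ 3 + C (a4p r) * X ^ 4

theorem polySubRpowDeriv_rankinPolyPlus_zero (r t : ℝ) :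
    polySubRpowDeriv (rankinPolyPlus r) r 0 t =
      hfun r (a1p r) (a2p r) (a3p r) (a4p r) 1 - hfun r (a1p r) (a2p r) (a3p r) (a4p r) t := by
  simp only [polySubRpowDeriv_zero, rankinPolyPlus, hfun, a0p, eval_add, eval_mul, eval_C, eval_X,
    eval_pow, Real.one_rpow]
  ring

theorem polySubRpowDeriv_rankinPolyPlus_one (r t : ℝ) :
    polySubRpowDeriv (rankinPolyPlus r) r 1 t =
      a1p r + 2 * a2p r * t + 3 * a3p r * t ^ 2 + 4 * a4p r * t ^ 3 - r * t ^ (r - 1) := by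
  simp only [polySubRpowDeriv, rankinPolyPlus, Function.iterate_one, derivative_add, derivative_C,
    derivative_C_mul_X, derivative_C_mul_X_pow, eval_add, eval_mul, eval_C, eval_X, eval_pow,
    descPochhammer_one, Nat.cast_one]
  norm_num
  ring

theorem iterate_derivative_rankinPolyPlus_five (r : ℝ) :
    derivative^[5] (rankinPolyPlus r) = 0 :=
  iterate_derivative_eq_zero (by unfold rankinPolyPlus; compute_degree!)

/-- The formulas for `a⁺` solve these four equations, which are linear in `a₁, …, a₄`
(recall `a₀ = 1 − a₁ − ⋯ − a₄`). -/
theorem rankinPolyPlus_interpolates (r : ℝ) {x : ℝ} (hx : x = κp ∨ x = ηp) :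
    polySubRpowDeriv (rankinPolyPlus r) r 0 x = 0 ∧
      polySubRpowDeriv (rankinPolyPlus r) r 1 x = 0 := by
  have hκ1 : κp - 1 ≠ 0 := sub_ne_zero.2 κp_mem_Ioo.2.ne
  have hη1 : ηp - 1 ≠ 0 := sub_ne_zero.2 ηp_mem_Ioo.2.ne
  have hκη : κp - ηp ≠ 0 := sub_ne_zero.2 κp_lt_ηp.ne
  rw [polySubRpowDeriv_rankinPolyPlus_zero, polySubRpowDeriv_rankinPolyPlus_one]
  rcases hx with rfl | rfl <;> constructor <;>
  · simp only [hfun, Real.one_rpow, a1p, a2p, a3p, a4p, P1p, P2p, P3p, P4p]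
    generalize κp ^ (r - 1) = U
    generalize ηp ^ (r - 1) = V
    generalize κp ^ r = X
    generalize ηp ^ r = Y
    field_simp
    ring

theorem mul_hfun_one_sub_nonneg {r c t : ℝ} (hr : 0 ≤ r)
    (hc : 0 ≤ c * (descPochhammer ℝ 5).eval r) (ht : t ∈ Icc 0 1) :
    0 ≤ c * (hfun r (a1p r) (a2p r) (a3p r) (a4p r) 1 -
      hfun r (a1p r) (a2p r) (a3p r) (a4p r) t) := by
  obtain ⟨hκ0, hκ1⟩ := rankinPolyPlus_interpolates r (Or.inl rfl)
  obtain ⟨hη0, hη1⟩ := rankinPolyPlus_interpolates r (Or.inr rfl)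
  rw [← polySubRpowDeriv_rankinPolyPlus_zero]
  refine nonneg_of_double_zeros_of_fifth_deriv_nonpos
    (f := fun k x => c * polySubRpowDeriv (rankinPolyPlus r) r k x)
    ((continuous_polySubRpowDeriv_zero _ hr).continuousOn.const_mul c) ?_ κp_mem_Ioo ηp_mem_Ioo
    κp_lt_ηp.ne (by simp [hκ0]) (by simp [hη0]) (by simp [polySubRpowDeriv_rankinPolyPlus_zero])
    (by simp [hκ1]) (by simp [hη1]) ?_ ht
  · exact fun k x hx => (hasDerivAt_polySubRpowDeriv _ r k hx.1.ne').const_mul c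
  · intro x hx
    have hxr := Real.rpow_pos_of_pos hx.1 (r - 5)
    simp only [polySubRpowDeriv, iterate_derivative_rankinPolyPlus_five, eval_zero,
      Nat.cast_ofNat]
    nlinarith [mul_nonneg hc hxr.le]

/-- For `r ∈ ℛ⁻` (so in particular `r > 0`) the function `h_r(·; a⁺)` is at most
`h_r(1; a⁺)` on `[0,1]`, while for `r ∈ ℛ⁺` it is at least `h_r(1; a⁺)` on `[0,1]`. -/
theorem hfun_extremum_plus_coeffs (r t : ℝ) (ht : t ∈ Set.Icc (0 : ℝ) 1) :
    (r ∈ Rminus → 0 < r →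
      hfun r (a1p r) (a2p r) (a3p r) (a4p r) t ≤ hfun r (a1p r) (a2p r) (a3p r) (a4p r) 1) ∧
    (r ∈ Rplus →
      hfun r (a1p r) (a2p r) (a3p r) (a4p r) 1 ≤ hfun r (a1p r) (a2p r) (a3p r) (a4p r) t) := by
  refine ⟨fun hr hr0 => ?_, fun hr => ?_⟩
  · have := mul_hfun_one_sub_nonneg (c := 1) hr0.le
      (by simpa using descPochhammer_eval_five_nonneg_of_mem_Rminus hr) ht
    linarith
  · have hr0 : 0 ≤ r := by rcases hr with h | h <;> linarith [h.1]
    have := mul_hfun_one_sub_nonneg (c := -1) hr0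
      (by simpa using descPochhammer_eval_five_nonpos_of_mem_Rplus hr) ht
    linarith
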